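/- arXiv:1712.04381 — 5 statements merged into one kernel-verified Lean document; each statement's English description precedes it below -/
import Mathlib

section
/- Let P ⊆ ℝ^d be a full-dimensional polytope (compact, with nonempty interior) with 0 ∉ P. Then the function L_P(s) = #(sP ∩ ℤ^d) is not nondecreasing on [0, ∞): there exists s₀ > 0 and ε₀ > 0 such that L_P(s₀) > L_P(s₀ + ε) for all 0 < ε < ε₀. -/
/-!
Take a lattice point `z` in some dilate of `P` (which exists because `P` has interior points) and
let `s₀` be the largest `s` with `z ∈ s • P`; it exists since `P` is compact and `0 ∉ P`. As
`P` is compact, only finitely many lattice points lie in `s • P` for `s` near `s₀`, and each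
of them that is not in `s₀ • P` stays outside `s • P` for `s` close to `s₀`, because `P` is closed.
So for small `ε > 0` the lattice points of `(s₀ + ε) • P` are among those of `s₀ • P`, and `z`
is lost.
-/

open Pointwise

noncomputable def latticeCount {d : ℕ} (S : Set (Fin d → ℝ)) : ℕ :=
  Set.ncard {x : Fin d → ℤ | (fun i => (x i : ℝ)) ∈ S}

open Filter Topology

section Dilates

variable {E : Type*} [NormedAddCommGroup E] [NormedSpace ℝ E] {P : Set E}

lemma eventually_notMem_smul_of_isClosed (hP : IsClosed P) {s₀ : ℝ} (hs₀ : s₀ ≠ 0) {y : E}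
    (hy : y ∉ s₀ • P) : ∀ᶠ s in 𝓝 s₀, y ∉ s • P := by
  have hcont : ContinuousAt (fun s : ℝ => s⁻¹ • y) s₀ :=
    (continuousAt_inv₀ hs₀).smul continuousAt_const
  rw [Set.mem_smul_set_iff_inv_smul_mem₀ hs₀] at hy
  filter_upwards [hcont.eventually_mem (hP.isOpen_compl.mem_nhds hy), eventually_ne_nhds hs₀]
    with s hs hs0
  rwa [Set.mem_smul_set_iff_inv_smul_mem₀ hs0]

lemma exists_isGreatest_setOf_mem_smul (hP : IsCompact P) (h0 : (0 : E) ∉ P) {z : E}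
    {s₁ : ℝ} (hs₁ : 0 < s₁) (hz : z ∈ s₁ • P) :
    ∃ s₀, 0 < s₀ ∧ IsGreatest {s : ℝ | z ∈ s • P} s₀ := by
  rw [Set.mem_smul_set_iff_inv_smul_mem₀ hs₁.ne'] at hz
  have hz0 : z ≠ 0 := by
    rintro rfl
    exact h0 (by simpa using hz)
  -- In terms of `t = s⁻¹` the scalings form a closed set, and `0` is not among them.
  have hK : IsCompact ({t : ℝ | t • z ∈ P} ∩ Set.Ici 0) :=
    ((isClosedEmbedding_smul_left hz0).isCompact_preimage hP).inter_right isClosed_Ici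
  obtain ⟨t₀, ⟨ht₀P, ht₀⟩, hleast⟩ := hK.exists_isLeast ⟨s₁⁻¹, hz, (inv_pos.2 hs₁).le⟩
  have ht₀pos : 0 < t₀ := ht₀.lt_of_ne (by rintro rfl; exact h0 (by simpa using ht₀P))
  refine ⟨t₀⁻¹, inv_pos.2 ht₀pos, ?_, fun s hs => ?_⟩
  · show z ∈ t₀⁻¹ • P
    rwa [Set.mem_smul_set_iff_inv_smul_mem₀ (inv_ne_zero ht₀pos.ne'), inv_inv]
  · rcases le_or_gt s 0 with hs0 | hs0
    · exact hs0.trans (inv_pos.2 ht₀pos).le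
    · rw [Set.mem_ofPred_eq, Set.mem_smul_set_iff_inv_smul_mem₀ hs0.ne'] at hs
      exact (le_inv_comm₀ ht₀pos hs0).1 (hleast ⟨hs, (inv_pos.2 hs0).le⟩)

lemma eventually_preimage_smul_subset {ι : Type*} {f : ι → E}
    (hf : ∀ K, IsCompact K → (f ⁻¹' K).Finite) (hP : IsCompact P) {s₀ : ℝ} (hs₀ : s₀ ≠ 0) :
    ∀ᶠ s in 𝓝 s₀, f ⁻¹' (s • P) ⊆ f ⁻¹' (s₀ • P) := by
  set I := Set.Icc (s₀ - 1) (s₀ + 1)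
  have hF : (f ⁻¹' (I • P) \ f ⁻¹' (s₀ • P)).Finite :=
    (hf _ (isCompact_Icc.smul_set hP)).sdiff
  have hout : ∀ᶠ s in 𝓝 s₀, ∀ y ∈ f ⁻¹' (I • P) \ f ⁻¹' (s₀ • P), f y ∉ s • P :=
    (eventually_all_finite hF).2 fun y hy =>
      eventually_notMem_smul_of_isClosed hP.isClosed hs₀ hy.2
  filter_upwards [hout, Icc_mem_nhds (sub_one_lt s₀) (lt_add_one s₀)]
    with s hs hsI y hy
  by_contra hy₀
  exact hs y ⟨Set.smul_set_subset_smul hsI hy, hy₀⟩ hy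

end Dilates

section Lattice

variable {d : ℕ}

lemma finite_preimage_intCast_of_isCompact {K : Set (Fin d → ℝ)} (hK : IsCompact K) :
    ((fun (x : Fin d → ℤ) i => (x i : ℝ)) ⁻¹' K).Finite :=
  ((IsClosedEmbedding.piMap fun _ => Int.isClosedEmbedding_coe_real).isCompact_preimage
    hK).finite_of_discrete

lemma exists_intCast_mem_smul {P : Set (Fin d → ℝ)} (hP : (interior P).Nonempty) :
    ∃ s : ℝ, 0 < s ∧ ∃ x : Fin d → ℤ, (fun i => (x i : ℝ)) ∈ s • P := by
  obtain ⟨c, hc⟩ := hP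
  obtain ⟨r, hr, hball⟩ := Metric.mem_nhds_iff.1 (mem_interior_iff_mem_nhds.1 hc)
  refine ⟨r⁻¹, inv_pos.2 hr, fun i => round (r⁻¹ * c i), Set.smul_set_mono hball ?_⟩
  rw [smul_ball (inv_ne_zero hr.ne'), Real.norm_eq_abs, abs_of_pos (inv_pos.2 hr),
    inv_mul_cancel₀ hr.ne', Metric.mem_ball]
  refine lt_of_le_of_lt ((dist_pi_le_iff (by norm_num)).2 fun i => ?_)
    (by norm_num : (1 : ℝ) / 2 < 1)
  rw [Real.dist_eq, abs_sub_comm]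
  exact abs_sub_round _

end Lattice

theorem stmt3 {d : ℕ} (P : Set (Fin d → ℝ))
    (hpoly : ∃ V : Finset (Fin d → ℝ), P = convexHull ℝ (V : Set (Fin d → ℝ)))
    (hint : (interior P).Nonempty)
    (h0 : (0 : Fin d → ℝ) ∉ P) :
    ∃ s₀ : ℝ, 0 < s₀ ∧ ∃ ε₀ : ℝ, 0 < ε₀ ∧ ∀ ε : ℝ, 0 < ε → ε < ε₀ →
      latticeCount ((s₀ + ε) • P) < latticeCount (s₀ • P) := by
  have hP : IsCompact P := by
    obtain ⟨V, rfl⟩ := hpoly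
    exact V.finite_toSet.isCompact_convexHull (𝕜 := ℝ)
  obtain ⟨s₁, hs₁, z, hz⟩ := exists_intCast_mem_smul hint
  obtain ⟨s₀, hs₀, hz₀, hmax⟩ := exists_isGreatest_setOf_mem_smul hP h0 hs₁ hz
  obtain ⟨ε₀, hε₀, hsub⟩ := Metric.eventually_nhds_iff.1 <|
    eventually_preimage_smul_subset (fun _ => finite_preimage_intCast_of_isCompact) hP hs₀.ne'
  refine ⟨s₀, hs₀, ε₀, hε₀, fun ε hε hεε₀ => Set.ncard_lt_ncard ⟨hsub ?_, fun h => ?_⟩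
    (finite_preimage_intCast_of_isCompact (hP.smul s₀))⟩
  · rwa [Real.dist_eq, add_sub_cancel_left, abs_of_pos hε]
  · linarith [hmax (h hz₀)]
end

section
/- Let P ⊆ ℝ^d be a full-dimensional polytope such that L_P(s) = L_P(⌊s⌋) for all real s ≥ 0. Then P can be written as P = {x ∈ ℝ^d : ⟨a_i, x⟩ ≤ b_i, i = 1,…,n} where each b_i ∈ {0,1} and a_i ∈ ℤ^d whenever b_i = 1. -/
/-!
Taking `s > 0` small, `L_P(s) = L_P(0) = 1` forces `0 ∈ P`; then `⌊t⌋P ⊆ tP`, and since both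
contain equally many lattice points, every lattice point of `tP` already lies in `⌊t⌋P`.

Write `P` as the intersection of its facet halfspaces `⟨a, y⟩ ≤ c`, obtained from the vertices of
the polar of `P` around an interior point. As `0 ∈ P` we have `c ≥ 0`, and if `c > 0` we rescale
to `c = 1`. The facet then contains a basis `v_k` of `ℝ^d`. A lattice point `z = ∑ λ_k v_k` with
all `λ_k ≥ 0` lies in `tP` for `t = ⟨a, z⟩ = ∑ λ_k`, hence in `⌊t⌋P`, which forces `t ≤ ⌊t⌋`:
so `⟨a, z⟩ ∈ ℤ`. The cone spanned by the `v_k` contains both `z` and `z + e_j` for some lattice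
point `z`, whence `a_j ∈ ℤ`.
-/

open Pointwise

open Matrix Set Filter Topology

section LinearAlgebra

variable {ι : Type*} [Fintype ι]

lemma dotProductEquiv_symm_dotProduct [DecidableEq ι] (f : Module.Dual ℝ (ι → ℝ)) (x : ι → ℝ) :
    (dotProductEquiv ℝ ι).symm f ⬝ᵥ x = f x := by
  conv_rhs => rw [← (dotProductEquiv ℝ ι).apply_symm_apply f]
  rfl

lemma Submodule.exists_ne_zero_dotProduct_eq_zero_of_ne_top {W : Submodule ℝ (ι → ℝ)}
    (hW : W ≠ ⊤) : ∃ h ≠ 0, ∀ x ∈ W, h ⬝ᵥ x = 0 := by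
  classical
  obtain ⟨f, hf0, hWf⟩ := W.exists_le_ker_of_lt_top hW.lt_top
  exact ⟨(dotProductEquiv ℝ ι).symm f, by simpa using hf0, fun x hx => by
    simpa [dotProductEquiv_symm_dotProduct] using hWf hx⟩

lemma eq_zero_of_dotProduct_eq_zero_of_span_eq_top {S : Set (ι → ℝ)}
    (hS : Submodule.span ℝ S = ⊤) {h : ι → ℝ} (hh : ∀ x ∈ S, h ⬝ᵥ x = 0) : h = 0 := by
  classical
  have hker : Submodule.span ℝ S ≤ LinearMap.ker (dotProductEquiv ℝ ι h) :=
    Submodule.span_le.2 fun x hx => by simpa using hh x hx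
  rw [hS] at hker
  simpa using dotProduct_self_eq_zero.1 (hker (Submodule.mem_top (x := h)))

end LinearAlgebra

lemma Submodule.span_eq_top_of_span_image_sub_eq_top {K E : Type*} [Field K] [AddCommGroup E]
    [Module K E] [FiniteDimensional K E] {T : Set E} {f : E →ₗ[K] K} {c : K} (hc : c ≠ 0)
    (hT : ∀ w ∈ T, f w = c) {p : E} (h : span K ((· - p) '' T) = ⊤) : span K T = ⊤ := by
  let L : E →ₗ[K] E := LinearMap.id - (c⁻¹ • f).smulRight p
  have hL : (· - p) '' T = L '' T := image_congr fun w hw => by simp [L, hT w hw, hc]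
  rw [hL, Submodule.span_image] at h
  refine Submodule.eq_top_of_finrank_eq (le_antisymm (Submodule.finrank_le _) ?_)
  have := Submodule.finrank_map_le L (span K T)
  rwa [h, finrank_top] at this

lemma exists_basis_mem_of_span_eq_top {K E : Type*} [Field K] [AddCommGroup E] [Module K E]
    [FiniteDimensional K E] {T : Set E} (hT : Submodule.span K T = ⊤) :
    ∃ (n : ℕ) (b : Module.Basis (Fin n) K E), ∀ k, b k ∈ T := by
  let b := Module.Basis.ofSpan hT.ge
  have := Module.Finite.finite_basis b
  refine ⟨_, b.reindex (Finite.equivFin _), fun k => ?_⟩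
  rw [Module.Basis.reindex_apply]
  exact Module.Basis.ofSpan_subset hT.ge (mem_range_self _)

lemma IsCompact.exists_mem_extremePoints_isMaxOn {E : Type*} [AddCommGroup E] [Module ℝ E]
    [TopologicalSpace E] [T2Space E] [IsTopologicalAddGroup E] [ContinuousSMul ℝ E]
    [LocallyConvexSpace ℝ E] {K : Set E} (hK : IsCompact K) (hne : K.Nonempty) (l : E →L[ℝ] ℝ) :
    ∃ a ∈ K.extremePoints ℝ, IsMaxOn l K a := by
  obtain ⟨z, hzK, hz⟩ := hK.exists_isMaxOn hne l.continuous.continuousOn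
  have h : IsExposed ℝ K {y ∈ K | ∀ w ∈ K, l w ≤ l y} := fun _ => ⟨l, rfl⟩
  obtain ⟨a, ha⟩ := (h.isCompact hK).extremePoints_nonempty ⟨z, hzK, hz⟩
  exact ⟨a, h.isExtreme.extremePoints_subset_extremePoints ha, ha.1.2⟩

lemma StarConvex.smul_set_subset_smul_set {E : Type*} [AddCommGroup E] [Module ℝ E] {P : Set E}
    (hP : StarConvex ℝ 0 P) {s t : ℝ} (hs : 0 ≤ s) (hst : s ≤ t) : s • P ⊆ t • P := by
  rintro _ ⟨q, hq, rfl⟩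
  rcases (hs.trans hst).eq_or_lt with rfl | ht
  · exact ⟨q, hq, by rw [le_antisymm hst hs]⟩
  refine ⟨(s / t) • q, hP.smul_mem hq (by positivity) (div_le_one_of_le₀ hst ht.le), ?_⟩
  simp only [smul_smul, mul_div_cancel₀ _ ht.ne']

lemma Convex.sum_smul_mem_smul {E κ : Type*} [AddCommGroup E] [Module ℝ E] {P : Set E}
    (hP : Convex ℝ P) {s : Finset κ} {w : κ → ℝ} {v : κ → E} (hw : ∀ k ∈ s, 0 ≤ w k)
    (hpos : 0 < ∑ k ∈ s, w k) (hv : ∀ k ∈ s, v k ∈ P) :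
    ∑ k ∈ s, w k • v k ∈ (∑ k ∈ s, w k) • P := by
  rw [mem_smul_set_iff_inv_smul_mem₀ hpos.ne']
  exact hP.centerMass_mem hw hpos hv

section Polar

variable {ι : Type*} [Fintype ι]

def polarSet (V : Finset (ι → ℝ)) (p : ι → ℝ) : Set (ι → ℝ) :=
  {a | ∀ w ∈ V, a ⬝ᵥ (w - p) ≤ 1}

def tightSet (V : Finset (ι → ℝ)) (p a : ι → ℝ) : Set (ι → ℝ) :=
  {w | w ∈ V ∧ a ⬝ᵥ (w - p) = 1}

/-- The vertices of the polar of `convexHull V` with respect to the interior point `p`: for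
these `a`, the halfspaces `{y | a ⬝ᵥ (y - p) ≤ 1}` are the facet halfspaces of `convexHull V`. -/
def facetNormals (V : Finset (ι → ℝ)) (p : ι → ℝ) : Set (ι → ℝ) :=
  {a ∈ polarSet V p | Submodule.span ℝ ((· - p) '' tightSet V p a) = ⊤}

variable {V : Finset (ι → ℝ)} {p : ι → ℝ}

lemma dotProduct_sub_le_one_of_mem_convexHull {a : ι → ℝ} (ha : a ∈ polarSet V p) {y : ι → ℝ}
    (hy : y ∈ convexHull ℝ (V : Set (ι → ℝ))) : a ⬝ᵥ (y - p) ≤ 1 := by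
  have hlin : IsLinearMap ℝ (a ⬝ᵥ ·) := ⟨dotProduct_add a, fun c x => dotProduct_smul c a x⟩
  have : a ⬝ᵥ y ≤ 1 + a ⬝ᵥ p := convexHull_min (t := {y | a ⬝ᵥ y ≤ 1 + a ⬝ᵥ p})
    (fun w hw => by
      have := ha w hw
      rw [dotProduct_sub] at this
      simp only [mem_ofPred_eq]
      linarith)
    (convex_halfSpace_le hlin _) hy
  rw [dotProduct_sub]; linarith

lemma isCompact_polarSet (hp : p ∈ interior (convexHull ℝ (V : Set (ι → ℝ)))) :
    IsCompact (polarSet V p) := by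
  refine Metric.isCompact_of_isClosed_isBounded ?_ ?_
  · simp only [polarSet, ofPred_forall]
    exact isClosed_iInter fun w => isClosed_iInter fun _ =>
      isClosed_le (continuous_id.dotProduct continuous_const) continuous_const
  · obtain ⟨r, hr, hball⟩ :=
      Metric.nhds_basis_closedBall.mem_iff.1 (mem_interior_iff_mem_nhds.1 hp)
    refine (Metric.isBounded_closedBall (x := 0) (r := r⁻¹)).subset fun a ha => ?_
    classical
    rw [mem_closedBall_zero_iff, pi_norm_le_iff_of_nonneg (by positivity)]
    intro j
    have hmem : ∀ s : ℝ, |s| = r → p + Pi.single j s ∈ convexHull ℝ (V : Set (ι → ℝ)) :=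
      fun s hs => hball (by simp [Pi.norm_single, hs])
    have h₁ := dotProduct_sub_le_one_of_mem_convexHull ha (hmem r (abs_of_pos hr))
    have h₂ := dotProduct_sub_le_one_of_mem_convexHull ha (hmem (-r) (by simp [abs_of_pos hr]))
    simp only [add_sub_cancel_left, dotProduct_single] at h₁ h₂
    rw [Real.norm_eq_abs, abs_le, ← one_div, neg_le, le_div_iff₀ hr, le_div_iff₀ hr]
    constructor <;> linarith

lemma eventually_add_smul_mem_polarSet {a h : ι → ℝ} (ha : a ∈ polarSet V p)
    (hh : ∀ w ∈ tightSet V p a, h ⬝ᵥ (w - p) = 0) :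
    ∀ᶠ t in 𝓝 (0 : ℝ), a + t • h ∈ polarSet V p := by
  refine (V.eventually_all).2 fun w hw => ?_
  simp only [add_dotProduct, smul_dotProduct, smul_eq_mul]
  rcases (ha w hw).lt_or_eq with hlt | heq
  · refine Tendsto.eventually_le_const hlt ?_
    have hc : Continuous fun t : ℝ => a ⬝ᵥ (w - p) + t * h ⬝ᵥ (w - p) := by fun_prop
    exact hc.tendsto' 0 _ (by simp)
  · exact Eventually.of_forall fun t => by simp [heq, hh w ⟨hw, heq⟩]

lemma mem_facetNormals_of_mem_extremePoints {a : ι → ℝ}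
    (ha : a ∈ (polarSet V p).extremePoints ℝ) : a ∈ facetNormals V p := by
  refine ⟨ha.1, ?_⟩
  by_contra hspan
  obtain ⟨h, hh0, hh⟩ := Submodule.exists_ne_zero_dotProduct_eq_zero_of_ne_top hspan
  obtain ⟨δ, hδ, hδQ⟩ := Metric.eventually_nhds_iff.1 (eventually_add_smul_mem_polarSet ha.1
    fun w hw => hh _ (Submodule.subset_span (mem_image_of_mem _ hw)))
  have hQ : ∀ t : ℝ, |t| < δ → a + t • h ∈ polarSet V p := fun t ht => hδQ (by simpa using ht)
  have hmid : a ∈ openSegment ℝ (a + (δ / 2) • h) (a + (-(δ / 2)) • h) :=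
    ⟨1 / 2, 1 / 2, by norm_num, by norm_num, by norm_num, by module⟩
  have := ha.2 (hQ _ (by rw [abs_of_pos (by positivity)]; linarith))
    (hQ _ (by rw [abs_neg, abs_of_pos (by positivity)]; linarith)) hmid
  simp only [add_eq_left, smul_eq_zero] at this
  exact this.elim (by positivity) hh0

lemma finite_facetNormals : (facetNormals V p).Finite := by
  refine Set.Finite.of_finite_image (f := tightSet V p) ?_ ?_
  · refine V.finite_toSet.finite_subsets.subset ?_
    rintro _ ⟨a, -, rfl⟩ w hw
    exact hw.1
  · intro a ha b _ hab
    refine sub_eq_zero.1 (eq_zero_of_dotProduct_eq_zero_of_span_eq_top ha.2 ?_)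
    rintro _ ⟨w, hw, rfl⟩
    have hwb : w ∈ tightSet V p b := hab ▸ hw
    rw [sub_dotProduct, hw.2, hwb.2, sub_self]

lemma exists_mem_facetNormals_lt (hp : p ∈ interior (convexHull ℝ (V : Set (ι → ℝ))))
    {x : ι → ℝ} (hx : x ∉ convexHull ℝ (V : Set (ι → ℝ))) :
    ∃ a ∈ facetNormals V p, 1 < a ⬝ᵥ (x - p) := by
  classical
  obtain ⟨f, α, hfP, hfx⟩ := geometric_hahn_banach_closed_point (convex_convexHull ℝ _)
    (V.finite_toSet.isClosed_convexHull (𝕜 := ℝ)) hx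
  have hf := dotProductEquiv_symm_dotProduct (ι := ι) f.toLinearMap
  have hpos : 0 < α - f p := sub_pos.2 (hfP p (interior_subset hp))
  set a₀ := (α - f p)⁻¹ • (dotProductEquiv ℝ ι).symm f.toLinearMap
  have ha₀ : a₀ ∈ polarSet V p := fun w hw => by
    rw [smul_dotProduct, dotProduct_sub, hf, hf, ContinuousLinearMap.coe_coe, smul_eq_mul,
      inv_mul_le_iff₀ hpos]
    linarith [hfP w (subset_convexHull ℝ _ hw)]
  have hx₀ : 1 < a₀ ⬝ᵥ (x - p) := by
    rw [smul_dotProduct, dotProduct_sub, hf, hf, ContinuousLinearMap.coe_coe, smul_eq_mul,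
      lt_inv_mul_iff₀ hpos]
    linarith
  obtain ⟨a, ha, hmax⟩ := (isCompact_polarSet hp).exists_mem_extremePoints_isMaxOn ⟨a₀, ha₀⟩
    (LinearMap.toContinuousLinearMap (dotProductEquiv ℝ ι (x - p)))
  refine ⟨a, mem_facetNormals_of_mem_extremePoints ha, ?_⟩
  have := isMaxOn_iff.1 hmax a₀ ha₀
  simp only [LinearMap.coe_toContinuousLinearMap', dotProductEquiv_apply_apply,
    dotProduct_comm (x - p)] at this
  linarith

theorem convexHull_eq_iInter_facetNormals
    (hp : p ∈ interior (convexHull ℝ (V : Set (ι → ℝ)))) :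
    convexHull ℝ (V : Set (ι → ℝ)) = ⋂ a ∈ facetNormals V p, {y | a ⬝ᵥ (y - p) ≤ 1} := by
  ext y
  simp only [mem_iInter₂, mem_ofPred_eq]
  refine ⟨fun hy a ha => dotProduct_sub_le_one_of_mem_convexHull ha.1 hy, fun h => ?_⟩
  by_contra hy
  obtain ⟨a, ha, hlt⟩ := exists_mem_facetNormals_lt hp hy
  exact (h a ha).not_gt hlt

end Polar

section Lattice

variable {ι : Type*} [Fintype ι]

def latticePoints (S : Set (ι → ℝ)) : Set (ι → ℤ) := {z | (fun i => (z i : ℝ)) ∈ S}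

lemma IsCompact.finite_latticePoints {K : Set (ι → ℝ)} (hK : IsCompact K) :
    (latticePoints K).Finite :=
  ((IsClosedEmbedding.piMap fun _ => Int.isClosedEmbedding_coe_real).isCompact_preimage
    hK).finite_of_discrete

lemma intCast_eq_zero_of_norm_lt_one {z : ι → ℤ} (hz : ‖fun i => (z i : ℝ)‖ < 1) :
    (fun i => (z i : ℝ)) = 0 := by
  funext i
  have hi : |(z i : ℝ)| < 1 := (norm_le_pi_norm (fun i => (z i : ℝ)) i).trans_lt hz
  have : |z i| < 1 := by exact_mod_cast hi
  simp [Int.abs_lt_one_iff.1 this]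

lemma exists_intCast_add_nonneg {κ : Type*} [Fintype κ] (φ : (ι → ℝ) →L[ℝ] (κ → ℝ))
    {M : ι → ℝ} (hM : ∀ k, 1 ≤ φ M k) :
    ∃ z : ι → ℤ, ∀ y : ι → ℝ, ‖y‖ ≤ 1 → ∀ k, 0 ≤ φ ((fun i => (z i : ℝ)) + y) k := by
  set N : ℕ := ⌈2 * ‖φ‖⌉₊
  refine ⟨fun i => round (N * M i), fun y hy k => ?_⟩
  set e := (fun i => ((round (N * M i) : ℤ) : ℝ)) - (N : ℝ) • M + y
  have hround : ‖(fun i => ((round (N * M i) : ℤ) : ℝ)) - (N : ℝ) • M‖ ≤ 1 :=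
    (pi_norm_le_iff_of_nonneg zero_le_one).2 fun i => by
      simpa [abs_sub_comm] using (abs_sub_round ((N : ℝ) * M i)).trans (by norm_num)
  have hbound : |φ e k| ≤ N := calc
    |φ e k| ≤ ‖φ e‖ := norm_le_pi_norm (φ e) k
    _ ≤ ‖φ‖ * ‖e‖ := φ.le_opNorm e
    _ ≤ ‖φ‖ * 2 := by gcongr; exact (norm_add_le _ _).trans (by linarith)
    _ ≤ N := by linarith [Nat.le_ceil (2 * ‖φ‖)]
  have hsplit : (fun i => ((round (N * M i) : ℤ) : ℝ)) + y = (N : ℝ) • M + e := by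
    simp only [e]; abel
  rw [hsplit, map_add, map_smul, Pi.add_apply, Pi.smul_apply, smul_eq_mul]
  nlinarith [abs_le.1 hbound, hM k, (N.cast_nonneg : (0 : ℝ) ≤ N)]

variable {κ : Type*} [Fintype κ] {P : Set (ι → ℝ)} {u : ι → ℝ}

lemma dotProduct_eq_sum_repr (b : Module.Basis κ ℝ (ι → ℝ)) (hb : ∀ k, u ⬝ᵥ b k = 1)
    (x : ι → ℝ) : u ⬝ᵥ x = ∑ k, b.repr x k := by
  conv_lhs => rw [← b.sum_repr x]
  simp only [dotProduct_sum, dotProduct_smul, hb, smul_eq_mul, mul_one]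

lemma exists_dotProduct_eq_intCast_of_repr_nonneg (hP : Convex ℝ P)
    (hu : ∀ y ∈ P, u ⬝ᵥ y ≤ 1)
    (hfloor : ∀ t : ℝ, 0 ≤ t → latticePoints (t • P) ⊆ latticePoints ((⌊t⌋ : ℝ) • P))
    (b : Module.Basis κ ℝ (ι → ℝ)) (hbP : ∀ k, b k ∈ P) (hbu : ∀ k, u ⬝ᵥ b k = 1) {z : ι → ℤ}
    (hz : ∀ k, 0 ≤ b.repr (fun i => (z i : ℝ)) k) : ∃ m : ℤ, u ⬝ᵥ (fun i => (z i : ℝ)) = m := by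
  set x : ι → ℝ := fun i => (z i : ℝ)
  set t := u ⬝ᵥ x
  have ht : t = ∑ k, b.repr x k := dotProduct_eq_sum_repr b hbu x
  rcases (ht ▸ Finset.sum_nonneg fun k _ => hz k : 0 ≤ t).eq_or_lt with h0 | hpos
  · exact ⟨0, by rw [← h0, Int.cast_zero]⟩
  have hxt : x ∈ t • P := by
    have := hP.sum_smul_mem_smul (fun k _ => hz k) (ht ▸ hpos) fun k _ => hbP k
    rwa [b.sum_repr, ← ht] at this
  obtain ⟨q, hq, hqx : (⌊t⌋ : ℝ) • q = x⟩ := hfloor t hpos.le hxt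
  have : t ≤ ⌊t⌋ := calc
    t = ⌊t⌋ * u ⬝ᵥ q := by rw [← smul_eq_mul, ← dotProduct_smul, hqx]
    _ ≤ ⌊t⌋ * 1 := mul_le_mul_of_nonneg_left (hu q hq) (by positivity)
    _ = ⌊t⌋ := mul_one _
  exact ⟨⌊t⌋, le_antisymm this (Int.floor_le t)⟩

theorem exists_eq_intCast_of_span_eq_top (hP : Convex ℝ P) (hu : ∀ y ∈ P, u ⬝ᵥ y ≤ 1)
    (hfloor : ∀ t : ℝ, 0 ≤ t → latticePoints (t • P) ⊆ latticePoints ((⌊t⌋ : ℝ) • P))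
    {T : Set (ι → ℝ)} (hT : Submodule.span ℝ T = ⊤) (hTP : T ⊆ P) (hTu : ∀ w ∈ T, u ⬝ᵥ w = 1) :
    ∃ a : ι → ℤ, u = fun j => (a j : ℝ) := by
  classical
  obtain ⟨n, b, hbT⟩ := exists_basis_mem_of_span_eq_top hT
  -- a lattice point so deep inside the cone spanned by `b` that `z + e_j` stays in it
  obtain ⟨z, hz⟩ := exists_intCast_add_nonneg
    (LinearMap.toContinuousLinearMap b.equivFun.toLinearMap) (M := b.equivFun.symm 1)
    fun k => by simp
  have hint : ∀ w : ι → ℤ, ‖(fun i => (w i : ℝ)) - fun i => (z i : ℝ)‖ ≤ 1 →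
      ∃ m : ℤ, u ⬝ᵥ (fun i => (w i : ℝ)) = m := fun w hw =>
    exists_dotProduct_eq_intCast_of_repr_nonneg hP hu hfloor b (fun k => hTP (hbT k))
      (fun k => hTu _ (hbT k)) fun k => by simpa using hz _ hw k
  have hcoord : ∀ j, ∃ m : ℤ, u j = m := fun j => by
    have hstep : (fun i => ((z + Pi.single j 1 : ι → ℤ) i : ℝ)) =
        (fun i => (z i : ℝ)) + Pi.single j 1 := by
      ext i
      simp [Pi.single_apply]
    obtain ⟨m₀, hm₀⟩ := hint z (by simp)
    obtain ⟨m₁, hm₁⟩ := hint (z + Pi.single j 1)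
      (by rw [hstep, add_sub_cancel_left, Pi.norm_single, norm_one])
    rw [hstep, dotProduct_add, hm₀, dotProduct_single, mul_one] at hm₁
    exact ⟨m₁ - m₀, by push_cast; linarith⟩
  choose a ha using hcoord
  exact ⟨a, funext ha⟩

lemma exists_normalized_halfspace {V : Finset (ι → ℝ)} {p a : ι → ℝ}
    (ha : a ∈ facetNormals V p) (h0 : (0 : ι → ℝ) ∈ convexHull ℝ (V : Set (ι → ℝ)))
    (hfloor : ∀ t : ℝ, 0 ≤ t → latticePoints (t • convexHull ℝ (V : Set (ι → ℝ))) ⊆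
      latticePoints ((⌊t⌋ : ℝ) • convexHull ℝ (V : Set (ι → ℝ)))) :
    ∃ (u : ι → ℝ) (c : ℝ), {y | a ⬝ᵥ (y - p) ≤ 1} = {y | u ⬝ᵥ y ≤ c} ∧ (c = 0 ∨ c = 1) ∧
      (c = 1 → ∃ a' : ι → ℤ, u = fun j => (a' j : ℝ)) := by
  classical
  set c := 1 + a ⬝ᵥ p with hc_def
  have hhalf : ∀ y, a ⬝ᵥ (y - p) ≤ 1 ↔ a ⬝ᵥ y ≤ c := fun y => by
    rw [dotProduct_sub, sub_le_iff_le_add, hc_def]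
  have hc : 0 ≤ c := by
    simpa using (hhalf 0).1 (dotProduct_sub_le_one_of_mem_convexHull ha.1 h0)
  rcases hc.eq_or_lt with hc0 | hcpos
  · refine ⟨a, 0, ?_, Or.inl rfl, fun h => absurd h zero_ne_one⟩
    ext y
    show a ⬝ᵥ (y - p) ≤ 1 ↔ a ⬝ᵥ y ≤ 0
    rw [hhalf, hc0]
  have hscale : ∀ y, a ⬝ᵥ (y - p) ≤ 1 ↔ (c⁻¹ • a) ⬝ᵥ y ≤ 1 := fun y => by
    rw [hhalf, smul_dotProduct, smul_eq_mul, inv_mul_le_iff₀ hcpos, mul_one]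
  refine ⟨c⁻¹ • a, 1, by ext y; exact hscale y, Or.inr rfl, fun _ => ?_⟩
  have htight : ∀ w ∈ tightSet V p a, dotProductEquiv ℝ ι a w = c := fun w hw => by
    have := hw.2
    rw [dotProduct_sub] at this
    rw [dotProductEquiv_apply_apply]
    linarith
  refine exists_eq_intCast_of_span_eq_top (convex_convexHull ℝ _)
    (fun y hy => (hscale y).1 (dotProduct_sub_le_one_of_mem_convexHull ha.1 hy)) hfloor
    (Submodule.span_eq_top_of_span_image_sub_eq_top hcpos.ne' htight ha.2)
    (fun w hw => subset_convexHull ℝ _ hw.1) fun w hw => ?_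
  rw [smul_dotProduct, ← dotProductEquiv_apply_apply, htight w hw, smul_eq_mul,
    inv_mul_cancel₀ hcpos.ne']

end Lattice

section LatticeCount

variable {d : ℕ} {P : Set (Fin d → ℝ)}

lemma zero_mem_of_latticeCount_floor (hP : Bornology.IsBounded P) (hne : P.Nonempty)
    (hL : ∀ s : ℝ, 0 ≤ s → latticeCount (s • P) = latticeCount ((⌊s⌋ : ℝ) • P)) :
    (0 : Fin d → ℝ) ∈ P := by
  obtain ⟨R, hR, hPR⟩ := hP.subset_closedBall_lt 0 0
  set s := (R + 1)⁻¹
  have hs0 : 0 < s := by positivity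
  have hcount : latticeCount (s • P) = 1 := by
    rw [hL s hs0.le, Int.floor_eq_zero_iff.2 ⟨hs0.le, inv_lt_one_of_one_lt₀ (by linarith)⟩,
      Int.cast_zero, zero_smul_set hne, latticeCount, ncard_eq_one]
    exact ⟨0, by ext z; simp [funext_iff]⟩
  obtain ⟨z, hz⟩ := ncard_eq_one.1 hcount
  have hzP : z ∈ {x : Fin d → ℤ | (fun i => (x i : ℝ)) ∈ s • P} := hz ▸ mem_singleton z
  obtain ⟨q, hq, hqz⟩ := hzP
  have hnorm : ‖fun i => (z i : ℝ)‖ < 1 := by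
    rw [← hqz, norm_smul, Real.norm_of_nonneg hs0.le]
    calc s * ‖q‖ ≤ s * R := by gcongr; simpa using hPR hq
      _ < 1 := by rw [inv_mul_lt_one₀ (by positivity)]; linarith
  rw [intCast_eq_zero_of_norm_lt_one hnorm, smul_eq_zero] at hqz
  exact hqz.resolve_left hs0.ne' ▸ hq

lemma latticePoints_floor_smul_eq (hP : IsCompact P) (hP0 : StarConvex ℝ 0 P)
    (hL : ∀ s : ℝ, 0 ≤ s → latticeCount (s • P) = latticeCount ((⌊s⌋ : ℝ) • P))
    {t : ℝ} (ht : 0 ≤ t) : latticePoints ((⌊t⌋ : ℝ) • P) = latticePoints (t • P) :=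
  eq_of_subset_of_ncard_le
    (fun _ hz => hP0.smul_set_subset_smul_set (by positivity) (Int.floor_le t) hz)
    (hL t ht).le (hP.smul t).finite_latticePoints

end LatticeCount

theorem stmt5 {d : ℕ} (P : Set (Fin d → ℝ))
    (hpoly : ∃ V : Finset (Fin d → ℝ), P = convexHull ℝ (V : Set (Fin d → ℝ)))
    (hint : (interior P).Nonempty)
    (hL : ∀ s : ℝ, 0 ≤ s →
      latticeCount (s • P) = latticeCount ((⌊s⌋ : ℝ) • P)) :
    ∃ (n : ℕ) (a : Fin n → (Fin d → ℝ)) (b : Fin n → ℝ),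
      P = ⋂ i, {x : Fin d → ℝ | ∑ j, a i j * x j ≤ b i} ∧
      (∀ i, b i = 0 ∨ b i = 1) ∧
      (∀ i, b i = 1 → ∃ a' : Fin d → ℤ, a i = fun j => (a' j : ℝ)) := by
  obtain ⟨V, rfl⟩ := hpoly
  obtain ⟨p, hp⟩ := hint
  have hcompact := V.finite_toSet.isCompact_convexHull (𝕜 := ℝ)
  have h0 := zero_mem_of_latticeCount_floor hcompact.isBounded ⟨p, interior_subset hp⟩ hL
  have hfloor := fun t ht => (latticePoints_floor_smul_eq hcompact
    ((convex_convexHull ℝ _).starConvex h0) hL (t := t) ht).ge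
  choose u c hu using fun a : facetNormals V p => exists_normalized_halfspace a.2 h0 hfloor
  have := (finite_facetNormals (V := V) (p := p)).to_subtype
  obtain ⟨n, ⟨e⟩⟩ := Finite.exists_equiv_fin (facetNormals V p)
  refine ⟨n, fun i => u (e.symm i), fun i => c (e.symm i), ?_, fun i => (hu _).2.1,
    fun i => (hu _).2.2⟩
  rw [convexHull_eq_iInter_facetNormals hp, biInter_eq_iInter, ← e.symm.surjective.iInter_comp]
  exact iInter_congr fun i => (hu _).1
end

section
/- Let ≺ be a strict partial order on {1,…,d} and let O(≺) = {x ∈ ℝ^d : 0 ≤ x_i ≤ 1 for all i, and x_i ≤ x_j whenever i ≺ j} be the order polytope. Then O(≺) is semi-reflexive: #(sO(≺) ∩ ℤ^d) = #(⌊s⌋O(≺) ∩ ℤ^d) for all real s ≥ 0. -/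
/-! The dilate `s • O(≺)` is cut out by `0 ≤ xᵢ ≤ s` and `xᵢ ≤ xⱼ` for `i ≺ j`, and an integer
`xᵢ` satisfies `xᵢ ≤ s` iff it satisfies `xᵢ ≤ ⌊s⌋`. -/

open Pointwise

def orderPolytopeOfHeight {ι : Type*} (r : ι → ι → Prop) (s : ℝ) : Set (ι → ℝ) :=
  {x | (∀ i, 0 ≤ x i ∧ x i ≤ s) ∧ ∀ i j, r i j → x i ≤ x j}

section

variable {ι : Type*} (r : ι → ι → Prop)

lemma zero_mem_orderPolytopeOfHeight {s : ℝ} (hs : 0 ≤ s) :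
    0 ∈ orderPolytopeOfHeight r s :=
  ⟨fun _ => ⟨le_rfl, hs⟩, fun _ _ _ => le_rfl⟩

lemma orderPolytopeOfHeight_zero : orderPolytopeOfHeight r 0 = {0} := by
  refine Set.eq_singleton_iff_unique_mem.2 ⟨zero_mem_orderPolytopeOfHeight r le_rfl, ?_⟩
  intro x hx
  funext i
  exact le_antisymm (hx.1 i).2 (hx.1 i).1

lemma smul_orderPolytopeOfHeight_one {s : ℝ} (hs : 0 ≤ s) :
    s • orderPolytopeOfHeight r 1 = orderPolytopeOfHeight r s := by
  obtain rfl | hs := hs.eq_or_lt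
  · rw [Set.zero_smul_set ⟨0, zero_mem_orderPolytopeOfHeight r zero_le_one⟩,
      orderPolytopeOfHeight_zero, Set.singleton_zero]
  ext x
  rw [Set.mem_smul_set_iff_inv_smul_mem₀ hs.ne']
  simp only [orderPolytopeOfHeight, Set.mem_ofPred_eq, Pi.smul_apply, smul_eq_mul,
    inv_mul_le_iff₀ hs, mul_one, mul_inv_cancel_left₀ hs.ne', inv_pos, hs,
    mul_nonneg_iff_of_pos_left]

lemma intCast_mem_orderPolytopeOfHeight_floor (x : ι → ℤ) (s : ℝ) :
    (fun i => (x i : ℝ)) ∈ orderPolytopeOfHeight r ⌊s⌋ ↔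
      (fun i => (x i : ℝ)) ∈ orderPolytopeOfHeight r s := by
  simp only [orderPolytopeOfHeight, Set.mem_ofPred_eq, ← Int.le_floor, Int.floor_intCast]

end

theorem stmt10_general {d : ℕ} (r : Fin d → Fin d → Prop)
    (P : Set (Fin d → ℝ))
    (hP : P = {x : Fin d → ℝ |
      (∀ i, 0 ≤ x i ∧ x i ≤ 1) ∧ ∀ i j, r i j → x i ≤ x j}) :
    ∀ s : ℝ, 0 ≤ s →
      latticeCount (s • P) = latticeCount ((⌊s⌋ : ℝ) • P) := by
  intro s hs
  change P = orderPolytopeOfHeight r 1 at hP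
  subst hP
  rw [smul_orderPolytopeOfHeight_one r hs,
    smul_orderPolytopeOfHeight_one r (Int.cast_nonneg (Int.floor_nonneg.2 hs))]
  unfold latticeCount
  simp only [intCast_mem_orderPolytopeOfHeight_floor]

theorem stmt10 {d : ℕ} (r : Fin d → Fin d → Prop)
    (hirr : ∀ i, ¬ r i i) (htrans : ∀ i j k, r i j → r j k → r i k)
    (P : Set (Fin d → ℝ))
    (hP : P = {x : Fin d → ℝ |
      (∀ i, 0 ≤ x i ∧ x i ≤ 1) ∧ ∀ i j, r i j → x i ≤ x j}) :
    ∀ s : ℝ, 0 ≤ s →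
      latticeCount (s • P) = latticeCount ((⌊s⌋ : ℝ) • P) :=
  stmt10_general r P hP
end

section
/- Let P be a full-dimensional polytope written as P = {x : ⟨a_i, x⟩ ≤ b_i, i = 1,…,n} where each b_i ∈ {0,1} and a_i ∈ ℤ^d when b_i = 1. Then the interior P° satisfies L_{P°}(s) = L_{P°}(⌈s⌉) for all real s ≥ 0. -/
/-! For `t > 0`, the dilate `t • P°` is cut out by the strict inequalities `⟨a_i, x⟩ < t b_i`
(rows with `a_i = 0` impose nothing). Rows with `b_i = 0` do not depend on `t`, and for rows with
`b_i = 1` the value `⟨a_i, z⟩` at a lattice point `z` is an integer, so `⟨a_i, z⟩ < s` holds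
exactly when `⟨a_i, z⟩ < ⌈s⌉`. Hence `s • P°` and `⌈s⌉ • P°` contain the same lattice points. -/

open Pointwise

open Matrix

theorem StrongDual.interior_setOf_le {E : Type*} [AddCommGroup E] [TopologicalSpace E]
    [ContinuousAdd E] [Module ℝ E] [ContinuousSMul ℝ E] {f : StrongDual ℝ E} (hf : f ≠ 0)
    (b : ℝ) : interior {x | f x ≤ b} = {x | f x < b} := by
  change interior (f ⁻¹' Set.Iic b) = f ⁻¹' Set.Iio b
  rw [← (f.isOpenMap_of_ne_zero hf).preimage_interior_eq_interior_preimage f.continuous,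
    interior_Iic]

theorem interior_setOf_dotProduct_le {ι : Type*} [Fintype ι] (c : ι → ℝ) {b : ℝ} (hb : 0 ≤ b) :
    interior {x | c ⬝ᵥ x ≤ b} = {x | c = 0 ∨ c ⬝ᵥ x < b} := by
  rcases eq_or_ne c 0 with rfl | hc
  · simp [hb]
  · let f : StrongDual ℝ (ι → ℝ) := LinearMap.toContinuousLinearMap (dotProductBilin ℝ ℝ c)
    have hf : f ≠ 0 := fun h => hc (dotProduct_self_eq_zero.mp (congrArg (· c) h))
    simp only [hc, false_or]
    exact StrongDual.interior_setOf_le hf b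

theorem mem_smul_interior_iInter_setOf_dotProduct_le {ι κ : Type*} [Fintype ι] [Finite κ]
    {a : κ → ι → ℝ} {b : κ → ℝ} (hb : ∀ i, 0 ≤ b i) {t : ℝ} (ht : 0 < t) (x : ι → ℝ) :
    x ∈ t • interior (⋂ i, {y | a i ⬝ᵥ y ≤ b i}) ↔ ∀ i, a i = 0 ∨ a i ⬝ᵥ x < t * b i := by
  simp only [Set.mem_smul_set_iff_inv_smul_mem₀ ht.ne', interior_iInter_of_finite,
    interior_setOf_dotProduct_le _ (hb _), Set.mem_iInter, Set.mem_ofPred_eq, dotProduct_smul,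
    smul_eq_mul, inv_mul_lt_iff₀ ht]

theorem stmt11_general {d n : ℕ} (a : Fin n → (Fin d → ℝ)) (b : Fin n → ℝ)
    (P : Set (Fin d → ℝ))
    (hP : P = ⋂ i, {x : Fin d → ℝ | ∑ j, a i j * x j ≤ b i})
    (hb : ∀ i, b i = 0 ∨ b i = 1)
    (ha : ∀ i, b i = 1 → ∃ a' : Fin d → ℤ, a i = fun j => (a' j : ℝ)) :
    ∀ s : ℝ, 0 < s →
      latticeCount (s • interior P) = latticeCount ((⌈s⌉ : ℝ) • interior P) := by
  intro s hs
  have hb₀ : ∀ i, 0 ≤ b i := fun i => by rcases hb i with h | h <;> simp [h]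
  replace hP : P = ⋂ i, {x | a i ⬝ᵥ x ≤ b i} := hP
  subst hP
  unfold latticeCount
  congr 1
  ext z
  rw [Set.mem_ofPred_eq, Set.mem_ofPred_eq, mem_smul_interior_iInter_setOf_dotProduct_le hb₀ hs,
    mem_smul_interior_iInter_setOf_dotProduct_le hb₀ (by exact_mod_cast Int.ceil_pos.mpr hs)]
  refine forall_congr' fun i => or_congr_right ?_
  rcases hb i with h | h
  · simp [h]
  · obtain ⟨a', ha'⟩ := ha i h
    have hdot : a i ⬝ᵥ (fun j => (z j : ℝ)) = ((a' ⬝ᵥ z : ℤ) : ℝ) := by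
      simp [ha', dotProduct]
    rw [h, mul_one, mul_one, hdot, Int.cast_lt, Int.lt_ceil]

theorem stmt11 {d n : ℕ} (a : Fin n → (Fin d → ℝ)) (b : Fin n → ℝ)
    (P : Set (Fin d → ℝ))
    (hP : P = ⋂ i, {x : Fin d → ℝ | ∑ j, a i j * x j ≤ b i})
    (hcompact : IsCompact P) (hint : (interior P).Nonempty)
    (hb : ∀ i, b i = 0 ∨ b i = 1)
    (ha : ∀ i, b i = 1 → ∃ a' : Fin d → ℤ, a i = fun j => (a' j : ℝ)) :
    ∀ s : ℝ, 0 < s →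
      latticeCount (s • interior P) = latticeCount ((⌈s⌉ : ℝ) • interior P) :=
  stmt11_general a b P hP hb ha
end

section
/- Let P ⊆ ℝ^d be a full-dimensional polytope containing the origin in its interior. Then L_P(s) = L_P(⌊s⌋) for all real s ≥ 0 if and only if L_{P°}(s) = L_{P°}(⌈s⌉) for all real s ≥ 0, where P° is the interior of P. -/
/-!
Let `ρ` be the gauge of `P`. For `s > 0` a lattice point `x` lies in `s • P` iff `ρ x ≤ s`, and
in `s • interior P` iff `ρ x < s`. Hence both conditions say that no lattice point enters (resp.
leaves) the dilates at a non-integral time, i.e. that `ρ` takes only integer values on `ℤ^d`: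
if `ρ x = r ∉ ℤ`, then `x` is counted in `r • P` but not in `⌊r⌋ • P`, and in `⌈r⌉ • interior P`
but not in `r • interior P`.
-/

open Pointwise Topology

lemma Bornology.IsBounded.finite_setOf_intCast_mem {d : ℕ} {S : Set (Fin d → ℝ)}
    (hS : Bornology.IsBounded S) : {x : Fin d → ℤ | (fun i => (x i : ℝ)) ∈ S}.Finite := by
  have hcast : Isometry ((↑) : ℤ → ℝ) := Isometry.of_dist_eq Int.dist_cast_real
  have hb := (hcast.postcomp_pi (α := Fin d)).antilipschitz.isBounded_preimage hS
  exact (Metric.finite_isBounded_inter_isClosed DiscreteTopology.isDiscrete hb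
    isClosed_univ).subset fun x hx => ⟨hx, trivial⟩

section Sublevel

variable {α : Type*} {f : α → ℝ}

lemma forall_ncard_setOf_le_floor_eq_iff (hf : ∀ x, 0 ≤ f x)
    (hfin : ∀ s, {x | f x ≤ s}.Finite) :
    (∀ s : ℝ, 0 ≤ s → {x | f x ≤ s}.ncard = {x | f x ≤ ⌊s⌋}.ncard) ↔
      ∀ x, ∃ n : ℤ, f x = n := by
  refine ⟨fun h x => ⟨⌊f x⌋, ?_⟩, fun h s _ => ?_⟩
  · have hsub : {y | f y ≤ ⌊f x⌋} ⊆ {y | f y ≤ f x} :=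
      fun y (hy : f y ≤ ⌊f x⌋) => hy.trans (Int.floor_le _)
    have heq := Set.eq_of_subset_of_ncard_le hsub (h _ (hf x)).le (hfin _)
    have hx : x ∈ {y | f y ≤ ⌊f x⌋} := heq ▸ le_refl (f x)
    exact le_antisymm hx (Int.floor_le _)
  · congr 1
    ext x
    obtain ⟨n, hn⟩ := h x
    simp only [Set.mem_ofPred_eq, hn, Int.cast_le, Int.le_floor]

lemma forall_ncard_setOf_lt_ceil_eq_iff (hf : ∀ x, 0 ≤ f x)
    (hfin : ∀ s, {x | f x ≤ s}.Finite) :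
    (∀ s : ℝ, 0 < s → {x | f x < s}.ncard = {x | f x < ⌈s⌉}.ncard) ↔
      ∀ x, ∃ n : ℤ, f x = n := by
  refine ⟨fun h x => ⟨⌈f x⌉, ?_⟩, fun h s _ => ?_⟩
  · rcases (hf x).eq_or_lt with hx0 | hx0
    · simp [← hx0]
    have hsub : {y | f y < f x} ⊆ {y | f y < ⌈f x⌉} :=
      fun y (hy : f y < f x) => hy.trans_le (Int.le_ceil _)
    have heq := Set.eq_of_subset_of_ncard_le hsub (h _ hx0).ge
      ((hfin _).subset fun y (hy : f y < ⌈f x⌉) => hy.le)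
    by_contra hne
    have hx : x ∈ {y | f y < ⌈f x⌉} := (Int.le_ceil _).lt_of_ne hne
    exact lt_irrefl (f x) (heq ▸ hx : x ∈ {y | f y < f x})
  · congr 1
    ext x
    obtain ⟨n, hn⟩ := h x
    simp only [Set.mem_ofPred_eq, hn, Int.cast_lt, Int.lt_ceil]

end Sublevel

section Gauge

variable {E : Type*} [NormedAddCommGroup E] [NormedSpace ℝ E] {P : Set E} {s : ℝ} {x : E}

lemma mem_smul_iff_gauge_le (hc : Convex ℝ P) (hb : Bornology.IsBounded P) (hcl : IsClosed P)
    (hP : P ∈ 𝓝 0) (hs : 0 ≤ s) : x ∈ s • P ↔ gauge P x ≤ s := by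
  rcases hs.eq_or_lt with rfl | hs
  · rw [Set.zero_smul_set (Set.nonempty_of_mem (mem_of_mem_nhds hP)), Set.mem_zero,
      (gauge_nonneg x).ge_iff_eq', gauge_eq_zero (absorbent_nhds_zero hP)
        ((NormedSpace.isVonNBounded_iff ℝ).2 hb)]
  · rw [Set.mem_smul_set_iff_inv_smul_mem₀ hs.ne']
    conv_lhs => rw [← hcl.closure_eq]
    rw [← gauge_le_one_iff_mem_closure hc hP, gauge_smul_of_nonneg (inv_nonneg.2 hs.le),
      smul_eq_mul, inv_mul_le_iff₀ hs, mul_one]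

lemma mem_smul_interior_iff_gauge_lt (hc : Convex ℝ P) (hP : P ∈ 𝓝 0) (hs : 0 < s) :
    x ∈ s • interior P ↔ gauge P x < s := by
  rw [Set.mem_smul_set_iff_inv_smul_mem₀ hs.ne', ← gauge_lt_one_iff_mem_interior hc hP,
    gauge_smul_of_nonneg (inv_nonneg.2 hs.le), smul_eq_mul, inv_mul_lt_iff₀ hs, mul_one]

end Gauge

section LatticeCount

variable {d : ℕ} {P : Set (Fin d → ℝ)} {s : ℝ}

lemma latticeCount_smul_eq_ncard_gauge_le (hc : Convex ℝ P) (hK : IsCompact P)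
    (hP : P ∈ 𝓝 0) (hs : 0 ≤ s) :
    latticeCount (s • P) = {x : Fin d → ℤ | gauge P (fun i => (x i : ℝ)) ≤ s}.ncard := by
  unfold latticeCount
  simp only [mem_smul_iff_gauge_le hc hK.isBounded hK.isClosed hP hs]

lemma latticeCount_smul_interior_eq_ncard_gauge_lt (hc : Convex ℝ P) (hP : P ∈ 𝓝 0)
    (hs : 0 < s) :
    latticeCount (s • interior P) =
      {x : Fin d → ℤ | gauge P (fun i => (x i : ℝ)) < s}.ncard := by
  unfold latticeCount
  simp only [mem_smul_interior_iff_gauge_lt hc hP hs]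

lemma finite_setOf_gauge_intCast_le (hc : Convex ℝ P) (hK : IsCompact P) (hP : P ∈ 𝓝 0)
    (s : ℝ) : {x : Fin d → ℤ | gauge P (fun i => (x i : ℝ)) ≤ s}.Finite :=
  (hK.isBounded.smul₀ |s|).finite_setOf_intCast_mem.subset fun _ hx =>
    (mem_smul_iff_gauge_le hc hK.isBounded hK.isClosed hP (abs_nonneg s)).2
      (hx.trans (le_abs_self s))

lemma forall_latticeCount_smul_floor_iff (hc : Convex ℝ P) (hK : IsCompact P)
    (hP : P ∈ 𝓝 0) :
    (∀ s : ℝ, 0 ≤ s → latticeCount (s • P) = latticeCount ((⌊s⌋ : ℝ) • P)) ↔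
      ∀ x : Fin d → ℤ, ∃ n : ℤ, gauge P (fun i => (x i : ℝ)) = n := by
  refine (forall₂_congr fun s hs => ?_).trans <|
    forall_ncard_setOf_le_floor_eq_iff (fun _ => gauge_nonneg _)
      (finite_setOf_gauge_intCast_le hc hK hP)
  rw [latticeCount_smul_eq_ncard_gauge_le hc hK hP hs,
    latticeCount_smul_eq_ncard_gauge_le hc hK hP (Int.cast_nonneg (Int.floor_nonneg.2 hs))]

lemma forall_latticeCount_smul_interior_ceil_iff (hc : Convex ℝ P) (hK : IsCompact P)
    (hP : P ∈ 𝓝 0) :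
    (∀ s : ℝ, 0 ≤ s →
        latticeCount (s • interior P) = latticeCount ((⌈s⌉ : ℝ) • interior P)) ↔
      ∀ x : Fin d → ℤ, ∃ n : ℤ, gauge P (fun i => (x i : ℝ)) = n := by
  refine Iff.trans ?_ <| forall_ncard_setOf_lt_ceil_eq_iff (fun _ => gauge_nonneg _)
    (finite_setOf_gauge_intCast_le hc hK hP)
  have hceil {s : ℝ} (hs : 0 < s) := latticeCount_smul_interior_eq_ncard_gauge_lt hc hP
    (Int.cast_pos.2 (Int.ceil_pos.2 hs))
  refine ⟨fun h s hs => ?_, fun h s hs => ?_⟩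
  · rw [← latticeCount_smul_interior_eq_ncard_gauge_lt hc hP hs, ← hceil hs]
    exact h s hs.le
  · rcases hs.eq_or_lt with rfl | hs
    · simp
    rw [latticeCount_smul_interior_eq_ncard_gauge_lt hc hP hs, hceil hs]
    exact h s hs

end LatticeCount

theorem stmt12 {d : ℕ} (P : Set (Fin d → ℝ))
    (hpoly : ∃ V : Finset (Fin d → ℝ), P = convexHull ℝ (V : Set (Fin d → ℝ)))
    (h0 : (0 : Fin d → ℝ) ∈ interior P) :
    (∀ s : ℝ, 0 ≤ s →
        latticeCount (s • P) = latticeCount ((⌊s⌋ : ℝ) • P)) ↔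
      (∀ s : ℝ, 0 ≤ s →
        latticeCount (s • interior P) = latticeCount ((⌈s⌉ : ℝ) • interior P)) := by
  obtain ⟨V, rfl⟩ := hpoly
  have hc := convex_convexHull ℝ (V : Set (Fin d → ℝ))
  have hK := V.finite_toSet.isCompact_convexHull (𝕜 := ℝ)
  have hP := mem_interior_iff_mem_nhds.mp h0
  exact (forall_latticeCount_smul_floor_iff hc hK hP).trans
    (forall_latticeCount_smul_interior_ceil_iff hc hK hP).symm
end
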